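/- Let A be a dual Banach algebra, i.e. there is a closed A-submodule A_* of A* with A = (A_*)* isometrically as A-bimodules. If the bidual A** endowed with the first Arens product □ is approximately cyclic amenable, then A is approximately cyclic amenable. -/

import Mathlib

/-!
A dual Banach algebra is a retract of its bidual: restricting `F ∈ A**` to the predual
`A_* ⊆ A*` and identifying `(A_*)*` with `A` gives a bounded homomorphism `π : (A**, □) → A`
with `π ∘ ι = id`, where `ι : A → A**` is the canonical embedding, itself a homomorphism for `□`.
Multiplicativity of `π` is where the bimodule property of `A_*` enters: for `f ∈ A_*` one has
`G · f = π(G) · f`. A cyclic derivation `D : A → A*` then lifts to the cyclic derivation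
`F ↦ D(π F) ∘ π` of `A**`; restricting an approximating net of the lift along `ι` gives
an approximating net for `D`.
-/

open Filter Topology

set_option synthInstance.maxHeartbeats 400000
set_option maxHeartbeats 800000

noncomputable section

universe u v

variable {A : Type u} [NonUnitalNormedRing A] [NormedSpace ℂ A]
  [IsScalarTower ℂ A A] [SMulCommClass ℂ A A]

/-- The left module action of `A` on its dual `A*`: `(a · f) b = f (b * a)`. -/
def lAct (a : A) (f : A →L[ℂ] ℂ) : A →L[ℂ] ℂ :=
  f.comp ((ContinuousLinearMap.mul ℂ A).flip a)

/-- The right module action of `A` on its dual `A*`: `(f · a) b = f (a * b)`. -/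
def rAct (f : A →L[ℂ] ℂ) (a : A) : A →L[ℂ] ℂ :=
  f.comp (ContinuousLinearMap.mul ℂ A a)

/-- A bounded linear `D : A → A*` is a derivation if `D (a * b) = D a · b + a · D b`. -/
def IsDerivation (D : A →L[ℂ] (A →L[ℂ] ℂ)) : Prop :=
  ∀ a b : A, D (a * b) = rAct (D a) b + lAct a (D b)

/-- A derivation `D : A → A*` is cyclic if `⟨D a, b⟩ + ⟨D b, a⟩ = 0` for all `a, b`. -/
def IsCyclicDeriv (D : A →L[ℂ] (A →L[ℂ] ℂ)) : Prop :=
  ∀ a b : A, D a b + D b a = 0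

/-- `D : A → A*` is approximately inner if there is a net `(f i)` in `A*` with
`D a = lim_i (a · f i - f i · a)` in norm, for every `a ∈ A`. -/
def IsApproxInner {A : Type u} [NonUnitalNormedRing A] [NormedSpace ℂ A]
    [IsScalarTower ℂ A A] [SMulCommClass ℂ A A] (D : A →L[ℂ] (A →L[ℂ] ℂ)) : Prop :=
  ∃ (ι : Type u) (l : Filter ι) (f : ι → (A →L[ℂ] ℂ)), l.NeBot ∧
    ∀ a : A, Tendsto (fun i => lAct a (f i) - rAct (f i) a) l (𝓝 (D a))

/-- `D : A → A*` is inner if `D a = a · f - f · a` for some fixed `f ∈ A*`. -/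
def IsInner (D : A →L[ℂ] (A →L[ℂ] ℂ)) : Prop :=
  ∃ f : A →L[ℂ] ℂ, ∀ a : A, D a = lAct a f - rAct f a

/-- A Banach algebra is approximately cyclic amenable if every cyclic bounded
derivation `D : A → A*` is approximately inner. -/
def ApproxCyclicAmenable (A : Type u) [NonUnitalNormedRing A] [NormedSpace ℂ A]
    [IsScalarTower ℂ A A] [SMulCommClass ℂ A A] : Prop :=
  ∀ D : A →L[ℂ] (A →L[ℂ] ℂ), IsDerivation D → IsCyclicDeriv D → IsApproxInner D

/-- A Banach algebra is cyclic amenable if every cyclic bounded derivation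
`D : A → A*` is inner. -/
def CyclicAmenable (A : Type u) [NonUnitalNormedRing A] [NormedSpace ℂ A]
    [IsScalarTower ℂ A A] [SMulCommClass ℂ A A] : Prop :=
  ∀ D : A →L[ℂ] (A →L[ℂ] ℂ), IsDerivation D → IsCyclicDeriv D → IsInner D

/-- The bidual of `A`; below we install the first Arens product on it. -/
abbrev Bidual (A : Type u) [NormedAddCommGroup A] [NormedSpace ℂ A] : Type u :=
  (A →L[ℂ] ℂ) →L[ℂ] ℂ

namespace Bidual

variable (A)

/-- `f ↦ (a ↦ f · a)` where `(f · a) b = f (a * b)`, as a continuous bilinear map. -/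
def rActL : (A →L[ℂ] ℂ) →L[ℂ] A →L[ℂ] (A →L[ℂ] ℂ) :=
  (((ContinuousLinearMap.compL ℂ A (A →L[ℂ] A) (A →L[ℂ] ℂ)).flip
      (ContinuousLinearMap.mul ℂ A)).comp
    (ContinuousLinearMap.compL ℂ A A ℂ))

@[simp] lemma rActL_apply (f : A →L[ℂ] ℂ) (a b : A) : rActL A f a b = f (a * b) := rfl

/-- The action `G · f` of the bidual on the dual: `(G · f) a = G (f · a)`. -/
def dotAct (G : Bidual A) : (A →L[ℂ] ℂ) →L[ℂ] (A →L[ℂ] ℂ) :=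
  (ContinuousLinearMap.compL ℂ A (A →L[ℂ] ℂ) ℂ G).comp (rActL A)

@[simp] lemma dotAct_apply (G : Bidual A) (f : A →L[ℂ] ℂ) (a : A) :
    dotAct A G f a = G (rActL A f a) := rfl

variable {A}

/-- The first Arens product on the bidual: `⟨F □ G, f⟩ = ⟨F, G · f⟩`. -/
instance : Mul (Bidual A) := ⟨fun F G => F.comp (dotAct A G)⟩

@[simp] lemma mul_apply (F G : Bidual A) (f : A →L[ℂ] ℂ) :
    (F * G) f = F (dotAct A G f) := rfl

lemma dotAct_add (G H : Bidual A) : dotAct A (G + H) = dotAct A G + dotAct A H := by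
  refine ContinuousLinearMap.ext fun g => ContinuousLinearMap.ext fun a => ?_
  simp

lemma dotAct_zero : dotAct A (0 : Bidual A) = 0 := by
  refine ContinuousLinearMap.ext fun g => ContinuousLinearMap.ext fun a => ?_
  simp

lemma dotAct_smul (c : ℂ) (G : Bidual A) : dotAct A (c • G) = c • dotAct A G := by
  refine ContinuousLinearMap.ext fun g => ContinuousLinearMap.ext fun a => ?_
  simp

instance instNonUnitalRing : NonUnitalRing (Bidual A) where
  __ := (inferInstance : AddCommGroup ((A →L[ℂ] ℂ) →L[ℂ] ℂ))
  mul := (· * ·)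
  left_distrib F G H := by
    refine ContinuousLinearMap.ext fun f => ?_
    simp [dotAct_add]
  right_distrib F G H := by
    refine ContinuousLinearMap.ext fun f => ?_
    rfl
  zero_mul F := by refine ContinuousLinearMap.ext fun f => ?_; rfl
  mul_zero F := by
    refine ContinuousLinearMap.ext fun f => ?_
    simp [dotAct_zero]
  mul_assoc F G H := by
    refine ContinuousLinearMap.ext fun f => ?_
    show F _ = F _
    congr 1
    refine ContinuousLinearMap.ext fun a => ?_
    show G _ = G _
    congr 1
    refine ContinuousLinearMap.ext fun b => ?_
    show H _ = H _
    congr 1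
    refine ContinuousLinearMap.ext fun c => ?_
    exact congrArg f (mul_assoc a b c)

lemma norm_dotAct_apply_le (G : Bidual A) (f : A →L[ℂ] ℂ) :
    ‖dotAct A G f‖ ≤ ‖G‖ * ‖f‖ := by
  refine ContinuousLinearMap.opNorm_le_bound _ (by positivity) fun a => ?_
  calc ‖G (rActL A f a)‖ ≤ ‖G‖ * ‖rActL A f a‖ := G.le_opNorm _
    _ ≤ ‖G‖ * (‖f‖ * ‖a‖) := by
        refine mul_le_mul_of_nonneg_left ?_ (norm_nonneg G)
        refine ContinuousLinearMap.opNorm_le_bound _ (by positivity) fun b => ?_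
        calc ‖f (a * b)‖ ≤ ‖f‖ * ‖a * b‖ := f.le_opNorm _
          _ ≤ ‖f‖ * (‖a‖ * ‖b‖) :=
              mul_le_mul_of_nonneg_left (norm_mul_le a b) (norm_nonneg f)
          _ = ‖f‖ * ‖a‖ * ‖b‖ := by ring
    _ = ‖G‖ * ‖f‖ * ‖a‖ := by ring

instance instNonUnitalNormedRing : NonUnitalNormedRing (Bidual A) where
  __ := instNonUnitalRing
  __ := (inferInstance : NormedAddCommGroup ((A →L[ℂ] ℂ) →L[ℂ] ℂ))
  norm_mul_le F G := by
    refine ContinuousLinearMap.opNorm_le_bound _ (by positivity) fun f => ?_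
    calc ‖F (dotAct A G f)‖ ≤ ‖F‖ * ‖dotAct A G f‖ := F.le_opNorm _
      _ ≤ ‖F‖ * (‖G‖ * ‖f‖) :=
          mul_le_mul_of_nonneg_left (norm_dotAct_apply_le G f) (norm_nonneg F)
      _ = ‖F‖ * ‖G‖ * ‖f‖ := by ring

instance : IsScalarTower ℂ (Bidual A) (Bidual A) where
  smul_assoc c F G := by
    refine ContinuousLinearMap.ext fun f => ?_
    rfl

instance : SMulCommClass ℂ (Bidual A) (Bidual A) where
  smul_comm c F G := by
    refine ContinuousLinearMap.ext fun f => ?_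
    show c • (F (dotAct A G f)) = F (dotAct A (c • G) f)
    rw [dotAct_smul]
    simp

end Bidual

noncomputable instance (M : Submodule ℂ (A →L[ℂ] ℂ)) : NormedAddCommGroup ↥M :=
  inferInstance

noncomputable instance (M : Submodule ℂ (A →L[ℂ] ℂ)) : NormedSpace ℂ ↥M :=
  inferInstance

/-- The canonical evaluation map `A → (A_*)*` for a subspace `A_* ⊆ A*`. -/
def dualEval (M : Submodule ℂ (A →L[ℂ] ℂ)) (a : A) : ↥M →L[ℂ] ℂ :=
  (NormedSpace.inclusionInDoubleDual ℂ A a).comp M.subtypeL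


open NormedSpace

section Retract

variable {B : Type u} [NonUnitalNormedRing B] [NormedSpace ℂ B]

omit [IsScalarTower ℂ A A] [SMulCommClass ℂ A A] in
def pullbackDeriv (π : B →L[ℂ] A) (D : A →L[ℂ] (A →L[ℂ] ℂ)) :
    B →L[ℂ] (B →L[ℂ] ℂ) :=
  ContinuousLinearMap.precomp ℂ π ∘L D ∘L π

omit [IsScalarTower ℂ A A] [SMulCommClass ℂ A A] in
@[simp]
lemma pullbackDeriv_apply (π : B →L[ℂ] A) (D : A →L[ℂ] (A →L[ℂ] ℂ)) (x y : B) :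
    pullbackDeriv π D x y = D (π x) (π y) := rfl

omit [IsScalarTower ℂ A A] [SMulCommClass ℂ A A] in
lemma IsCyclicDeriv.pullback (π : B →L[ℂ] A) {D : A →L[ℂ] (A →L[ℂ] ℂ)}
    (hD : IsCyclicDeriv D) : IsCyclicDeriv (pullbackDeriv π D) :=
  fun x y => hD (π x) (π y)

variable [IsScalarTower ℂ B B] [SMulCommClass ℂ B B]

lemma IsDerivation.pullback {π : B →L[ℂ] A} (hπ : ∀ x y, π (x * y) = π x * π y)
    {D : A →L[ℂ] (A →L[ℂ] ℂ)} (hD : IsDerivation D) :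
    IsDerivation (pullbackDeriv π D) := by
  intro x y
  ext z
  change D (π (x * y)) (π z) = D (π x) (π (y * z)) + D (π y) (π (z * x))
  rw [hπ, hπ, hπ, hD]
  rfl

lemma lAct_comp {j : A →L[ℂ] B} (hj : ∀ a b, j (a * b) = j a * j b) (a : A)
    (g : B →L[ℂ] ℂ) : (lAct (j a) g).comp j = lAct a (g.comp j) := by
  ext b
  exact congrArg g (hj b a).symm

lemma rAct_comp {j : A →L[ℂ] B} (hj : ∀ a b, j (a * b) = j a * j b) (a : A)
    (g : B →L[ℂ] ℂ) : (rAct g (j a)).comp j = rAct (g.comp j) a := by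
  ext b
  exact congrArg g (hj a b).symm

lemma IsApproxInner.of_pullback {j : A →L[ℂ] B} (hj : ∀ a b, j (a * b) = j a * j b)
    {π : B →L[ℂ] A} (hπj : ∀ a, π (j a) = a) {D : A →L[ℂ] (A →L[ℂ] ℂ)}
    (h : IsApproxInner (pullbackDeriv π D)) : IsApproxInner D := by
  obtain ⟨ι, l, f, hl, hf⟩ := h
  refine ⟨ι, l, fun i => (f i).comp j, hl, fun a => ?_⟩
  have hrestr : (pullbackDeriv π D (j a)).comp j = D a := by
    ext b
    simp [hπj]
  have hlim := ((ContinuousLinearMap.precomp ℂ j).continuous.tendsto _).comp (hf (j a))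
  simpa only [Function.comp_def, ContinuousLinearMap.precomp_apply,
    ContinuousLinearMap.sub_comp, lAct_comp hj, rAct_comp hj, hrestr] using hlim

lemma ApproxCyclicAmenable.of_retract (hB : ApproxCyclicAmenable B) (j : A →L[ℂ] B)
    (hj : ∀ a b, j (a * b) = j a * j b) (π : B →L[ℂ] A) (hπ : ∀ x y, π (x * y) = π x * π y)
    (hπj : ∀ a, π (j a) = a) : ApproxCyclicAmenable A := fun _ hD hcyc =>
  (hB _ (hD.pullback hπ) (hcyc.pullback π)).of_pullback hj hπj

end Retract

lemma inclusionInDoubleDual_mul (a b : A) :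
    (inclusionInDoubleDual ℂ A a * inclusionInDoubleDual ℂ A b : Bidual A) =
      inclusionInDoubleDual ℂ A (a * b) := by
  ext f
  simp [dual_def]

section Predual

omit [IsScalarTower ℂ A A] [SMulCommClass ℂ A A]

variable {M : Submodule ℂ (A →L[ℂ] ℂ)}

def predualIsometry (hiso : ∀ a : A, ‖dualEval M a‖ = ‖a‖) : A →ₗᵢ[ℂ] (M →L[ℂ] ℂ) where
  toLinearMap := (ContinuousLinearMap.precomp ℂ M.subtypeL ∘L inclusionInDoubleDual ℂ A)
  norm_map' := hiso

def predualProj (hiso : ∀ a : A, ‖dualEval M a‖ = ‖a‖)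
    (hsurj : Function.Surjective (dualEval M)) : Bidual A →L[ℂ] A :=
  ((LinearIsometryEquiv.ofSurjective (predualIsometry hiso) hsurj).symm :
      (M →L[ℂ] ℂ) →L[ℂ] A) ∘L ContinuousLinearMap.precomp ℂ M.subtypeL

lemma eq_of_forall_mem_predual (hiso : ∀ a : A, ‖dualEval M a‖ = ‖a‖) {a b : A}
    (h : ∀ f ∈ M, f a = f b) : a = b :=
  (predualIsometry hiso).injective <| ContinuousLinearMap.ext fun m => h m.1 m.2

variable (hiso : ∀ a : A, ‖dualEval M a‖ = ‖a‖) (hsurj : Function.Surjective (dualEval M))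

lemma apply_predualProj (F : Bidual A) {f : A →L[ℂ] ℂ} (hf : f ∈ M) :
    f (predualProj hiso hsurj F) = F f :=
  DFunLike.congr_fun
    ((LinearIsometryEquiv.ofSurjective (predualIsometry hiso) hsurj).apply_symm_apply
      (F.comp M.subtypeL)) ⟨f, hf⟩

lemma predualProj_inclusionInDoubleDual (a : A) :
    predualProj hiso hsurj (inclusionInDoubleDual ℂ A a) = a :=
  eq_of_forall_mem_predual hiso fun _ hf => apply_predualProj hiso hsurj _ hf

end Predual

lemma predualProj_mul {M : Submodule ℂ (A →L[ℂ] ℂ)} (hlmem : ∀ (a : A), ∀ f ∈ M, lAct a f ∈ M)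
    (hrmem : ∀ (a : A), ∀ f ∈ M, rAct f a ∈ M) (hiso : ∀ a : A, ‖dualEval M a‖ = ‖a‖)
    (hsurj : Function.Surjective (dualEval M)) (F G : Bidual A) :
    predualProj hiso hsurj (F * G) = predualProj hiso hsurj F * predualProj hiso hsurj G := by
  set π := predualProj hiso hsurj
  have hdot : ∀ f ∈ M, Bidual.dotAct A G f = lAct (π G) f := fun f hf =>
    ContinuousLinearMap.ext fun a => (apply_predualProj hiso hsurj G (hrmem a f hf)).symm
  refine eq_of_forall_mem_predual hiso fun f hf => ?_
  rw [apply_predualProj hiso hsurj _ hf, Bidual.mul_apply, hdot f hf,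
    ← apply_predualProj hiso hsurj F (hlmem _ f hf)]
  rfl

theorem approxCyclicAmenable_of_bidual_dualAlgebra_general
    {A : Type u} [NonUnitalNormedRing A] [NormedSpace ℂ A]
    [IsScalarTower ℂ A A] [SMulCommClass ℂ A A]
    (M : Submodule ℂ (A →L[ℂ] ℂ))
    (hlmem : ∀ (a : A), ∀ f ∈ M, lAct a f ∈ M)
    (hrmem : ∀ (a : A), ∀ f ∈ M, rAct f a ∈ M)
    (hiso : ∀ a : A, ‖dualEval M a‖ = ‖a‖)
    (hbij : Function.Bijective (dualEval M))
    (hACA : ApproxCyclicAmenable (Bidual A)) :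
    ApproxCyclicAmenable A :=
  hACA.of_retract (inclusionInDoubleDual ℂ A) (fun a b => (inclusionInDoubleDual_mul a b).symm)
    (predualProj hiso hbij.2) (predualProj_mul hlmem hrmem hiso hbij.2)
    (predualProj_inclusionInDoubleDual hiso hbij.2)

/-- Let `A` be a dual Banach algebra, with predual the closed
sub-bimodule `M` of `A*` (the canonical evaluation `A → M*` is an isometric bijection).
If `(A**, □)` is approximately cyclic amenable, then so is `A`. -/
theorem approxCyclicAmenable_of_bidual_dualAlgebra
    {A : Type u} [NonUnitalNormedRing A] [NormedSpace ℂ A]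
    [IsScalarTower ℂ A A] [SMulCommClass ℂ A A] [CompleteSpace A]
    (M : Submodule ℂ (A →L[ℂ] ℂ)) (hclosed : IsClosed (M : Set (A →L[ℂ] ℂ)))
    (hlmem : ∀ (a : A), ∀ f ∈ M, lAct a f ∈ M)
    (hrmem : ∀ (a : A), ∀ f ∈ M, rAct f a ∈ M)
    (hiso : ∀ a : A, ‖dualEval M a‖ = ‖a‖)
    (hbij : Function.Bijective (dualEval M))
    (hACA : ApproxCyclicAmenable (Bidual A)) :
    ApproxCyclicAmenable A :=
  approxCyclicAmenable_of_bidual_dualAlgebra_general M hlmem hrmem hiso hbij hACA
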